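/- Let σ be a density matrix on H_A ⊗ H_B (finite-dimensional) and suppose that for all unit vectors x ∈ H_A, y ∈ H_B, ⟨x⊗y, σ(x⊗y)⟩ = ⟨x, σ_A x⟩ · ⟨y, σ_B y⟩, where σ_A = tr_B σ and σ_B = tr_A σ. Then σ = σ_A ⊗ σ_B. -/

import Mathlib

open scoped ComplexOrder Kronecker

/-- The partial trace over the first (A) factor of an operator on H_A ⊗ H_B. -/
noncomputable def ptraceA {n m : ℕ} (σ : Matrix (Fin n × Fin m) (Fin n × Fin m) ℂ) :
    Matrix (Fin m) (Fin m) ℂ := fun j j' => ∑ i, σ (i, j) (i, j')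

/-- The partial trace over the second (B) factor of an operator on H_A ⊗ H_B. -/
noncomputable def ptraceB {n m : ℕ} (σ : Matrix (Fin n × Fin m) (Fin n × Fin m) ℂ) :
    Matrix (Fin n) (Fin n) ℂ := fun i i' => ∑ j, σ (i, j) (i', j)

/-- The tensor product x ⊗ y of vectors, as a vector on the product index set. -/
noncomputable def tensorVec {n m : ℕ} (x : Fin n → ℂ) (y : Fin m → ℂ) :
    Fin n × Fin m → ℂ := fun p => x p.1 * y p.2

/-! Rescaling x and y multiplies both sides of the hypothesis by |r|²|s|², so it holds for all
product vectors; thus σ - σ_A ⊗ σ_B has vanishing quadratic form on product vectors. Fixing y,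
the compression of this difference to H_A has vanishing quadratic form, hence is zero by complex
polarization; polarizing once more in y kills each block (i, i'), so the difference is zero. -/

open Matrix WithLp

lemma Matrix.eq_zero_of_forall_star_dotProduct_mulVec_self_eq_zero {ι : Type*} [Fintype ι]
    [DecidableEq ι] (M : Matrix ι ι ℂ) (h : ∀ v : ι → ℂ, star v ⬝ᵥ M *ᵥ v = 0) :
    M = 0 := by
  -- `⟪Mᴴ v, v⟫ = star v ⬝ᵥ M *ᵥ v`, so the complex polarization identity applies to `Mᴴ`.
  have hT : toLpLin 2 2 Mᴴ = 0 := by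
    refine (inner_map_self_eq_zero _).1 fun v => ?_
    rw [toLpLin_apply, ← toLp_ofLp 2 v, EuclideanSpace.inner_toLp_toLp, star_mulVec,
      conjTranspose_conjTranspose, dotProduct_comm, ← dotProduct_mulVec]
    exact h _
  simpa using (toLpLin 2 2).injective (hT.trans (map_zero _).symm)

lemma exists_eq_smul_of_sum_norm_sq_eq_one {ι : Type*} [Fintype ι] [Nonempty ι]
    (x : ι → ℂ) :
    ∃ (r : ℂ) (u : ι → ℂ), ∑ i, ‖u i‖ ^ 2 = 1 ∧ x = r • u := by
  by_cases hx : x = 0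
  · classical
    obtain ⟨i⟩ := ‹Nonempty ι›
    refine ⟨0, Pi.single i 1, ?_, by simp [hx]⟩
    simp [Pi.single_apply, apply_ite]
  · have hx' : toLp 2 x ≠ 0 := by simpa using hx
    refine ⟨‖toLp 2 x‖, (‖toLp 2 x‖⁻¹ : ℂ) • x, ?_, ?_⟩
    · have hu := norm_smul_inv_norm (𝕜 := ℂ) hx'
      rw [← toLp_smul, ← pow_eq_one_iff_of_nonneg (norm_nonneg _) two_ne_zero,
        EuclideanSpace.norm_sq_eq] at hu
      exact hu
    · rw [smul_smul, mul_inv_cancel₀ (by simpa using hx'), one_smul]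

lemma star_smul_dotProduct_mulVec_smul {ι : Type*} [Fintype ι] (M : Matrix ι ι ℂ) (c : ℂ)
    (v : ι → ℂ) :
    star (c • v) ⬝ᵥ M *ᵥ (c • v) = star c * c * (star v ⬝ᵥ M *ᵥ v) := by
  rw [star_smul, mulVec_smul, smul_dotProduct, dotProduct_smul, smul_eq_mul, smul_eq_mul]
  ring

section TensorVec

variable {n m : ℕ}

lemma tensorVec_smul_smul (a b : ℂ) (x : Fin n → ℂ) (y : Fin m → ℂ) :
    tensorVec (a • x) (b • y) = (a * b) • tensorVec x y := by
  ext p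
  simp only [tensorVec, Pi.smul_apply, smul_eq_mul]
  ring

lemma star_tensorVec (x : Fin n → ℂ) (y : Fin m → ℂ) :
    star (tensorVec x y) = tensorVec (star x) (star y) := by
  ext p
  exact star_mul' (x p.1) (y p.2)

lemma tensorVec_dotProduct_tensorVec (x u : Fin n → ℂ) (y v : Fin m → ℂ) :
    tensorVec x y ⬝ᵥ tensorVec u v = (x ⬝ᵥ u) * (y ⬝ᵥ v) := by
  simp only [dotProduct, tensorVec, Fintype.sum_prod_type, Finset.sum_mul_sum]
  refine Finset.sum_congr rfl fun i _ => Finset.sum_congr rfl fun j _ => ?_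
  ring

lemma kronecker_mulVec_tensorVec (A : Matrix (Fin n) (Fin n) ℂ) (B : Matrix (Fin m) (Fin m) ℂ)
    (x : Fin n → ℂ) (y : Fin m → ℂ) :
    (A ⊗ₖ B) *ᵥ tensorVec x y = tensorVec (A *ᵥ x) (B *ᵥ y) := by
  ext p
  exact tensorVec_dotProduct_tensorVec _ _ _ _

lemma star_tensorVec_dotProduct_mulVec_tensorVec
    (M : Matrix (Fin n × Fin m) (Fin n × Fin m) ℂ) (x : Fin n → ℂ) (y : Fin m → ℂ) :
    star (tensorVec x y) ⬝ᵥ M *ᵥ tensorVec x y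
      = star x ⬝ᵥ
          (of fun i i' => star y ⬝ᵥ (of fun j j' => M (i, j) (i', j')) *ᵥ y) *ᵥ x := by
  simp only [dotProduct, mulVec, tensorVec, Pi.star_apply, of_apply, star_mul',
    Fintype.sum_prod_type, Finset.mul_sum, Finset.sum_mul]
  refine Finset.sum_congr rfl fun i _ => ?_
  rw [Finset.sum_comm]
  refine Finset.sum_congr rfl fun i' _ => Finset.sum_congr rfl fun j _ =>
    Finset.sum_congr rfl fun j' _ => ?_
  ring

lemma eq_zero_of_forall_star_tensorVec_dotProduct_mulVec_tensorVec_eq_zero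
    (M : Matrix (Fin n × Fin m) (Fin n × Fin m) ℂ)
    (h : ∀ x y, star (tensorVec x y) ⬝ᵥ M *ᵥ tensorVec x y = 0) : M = 0 := by
  have hblock (i i') : (of fun j j' => M (i, j) (i', j')) = 0 := by
    refine eq_zero_of_forall_star_dotProduct_mulVec_self_eq_zero _ fun y => ?_
    have hy := eq_zero_of_forall_star_dotProduct_mulVec_self_eq_zero _ fun x =>
      (star_tensorVec_dotProduct_mulVec_tensorVec M x y).symm.trans (h x y)
    simpa using congr_fun₂ hy i i'
  ext p q
  simpa using congr_fun₂ (hblock p.1 q.1) p.2 q.2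

end TensorVec

theorem stmt_14_general (n m : ℕ) (hn : 1 ≤ n) (hm : 1 ≤ m)
    (σ : Matrix (Fin n × Fin m) (Fin n × Fin m) ℂ)
    (h : ∀ (x : Fin n → ℂ) (y : Fin m → ℂ),
      (∑ i, ‖x i‖ ^ 2 = 1) → (∑ j, ‖y j‖ ^ 2 = 1) →
      dotProduct (star (tensorVec x y)) (σ.mulVec (tensorVec x y))
        = dotProduct (star x) ((ptraceB σ).mulVec x) *
          dotProduct (star y) ((ptraceA σ).mulVec y)) :
    σ = (ptraceB σ) ⊗ₖ (ptraceA σ) := by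
  have : Nonempty (Fin n) := ⟨⟨0, hn⟩⟩
  have : Nonempty (Fin m) := ⟨⟨0, hm⟩⟩
  have hσ (x : Fin n → ℂ) (y : Fin m → ℂ) :
      star (tensorVec x y) ⬝ᵥ σ *ᵥ tensorVec x y
        = (star x ⬝ᵥ ptraceB σ *ᵥ x) * (star y ⬝ᵥ ptraceA σ *ᵥ y) := by
    obtain ⟨a, u, hu, rfl⟩ := exists_eq_smul_of_sum_norm_sq_eq_one x
    obtain ⟨b, v, hv, rfl⟩ := exists_eq_smul_of_sum_norm_sq_eq_one y
    rw [tensorVec_smul_smul, star_smul_dotProduct_mulVec_smul,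
      star_smul_dotProduct_mulVec_smul, star_smul_dotProduct_mulVec_smul, h u v hu hv, star_mul']
    ring
  refine sub_eq_zero.1 <|
    eq_zero_of_forall_star_tensorVec_dotProduct_mulVec_tensorVec_eq_zero _ fun x y => ?_
  rw [sub_mulVec, dotProduct_sub, hσ, kronecker_mulVec_tensorVec, star_tensorVec,
    tensorVec_dotProduct_tensorVec, sub_self]

/-- If a density matrix σ on H_A ⊗ H_B satisfies
⟨x⊗y, σ(x⊗y)⟩ = ⟨x, σ_A x⟩⟨y, σ_B y⟩ for all unit vectors x ∈ H_A, y ∈ H_B,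
with σ_A = tr_B σ and σ_B = tr_A σ, then σ = σ_A ⊗ σ_B. -/
theorem stmt_14 (n m : ℕ) (hn : 1 ≤ n) (hm : 1 ≤ m)
    (σ : Matrix (Fin n × Fin m) (Fin n × Fin m) ℂ)
    (hσpos : σ.PosSemidef) (hσtr : σ.trace = 1)
    (h : ∀ (x : Fin n → ℂ) (y : Fin m → ℂ),
      (∑ i, ‖x i‖ ^ 2 = 1) → (∑ j, ‖y j‖ ^ 2 = 1) →
      dotProduct (star (tensorVec x y)) (σ.mulVec (tensorVec x y))
        = dotProduct (star x) ((ptraceB σ).mulVec x) *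
          dotProduct (star y) ((ptraceA σ).mulVec y)) :
    σ = (ptraceB σ) ⊗ₖ (ptraceA σ) :=
  stmt_14_general n m hn hm σ h
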